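/- For n ≥ 2, after removing any set of at most n−2 vertices from Q_n, the remaining graph is connected and has diameter exactly n. -/

import Mathlib

open SimpleGraph

/-- The `n`-dimensional hypercube: vertices are `Fin n → Bool`,
adjacent iff Hamming distance is `1`. -/
def Q (n : ℕ) : SimpleGraph (Fin n → Bool) where
  Adj u v := hammingDist u v = 1
  symm := ⟨fun u v (h : hammingDist u v = 1) => show hammingDist v u = 1 from (hammingDist_comm v u).trans h⟩
  loopless := ⟨fun u h => by simp [hammingDist_self] at h⟩

/-- Flip the `i`-th bit of `x`. -/
def flipBit {n : ℕ} (x : Fin n → Bool) (i : Fin n) : Fin n → Bool :=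
  Function.update x i (!x i)

/-- `S` is a subcube of dimension exactly `m` (fixing `n - m` coordinates). -/
def IsSubcube {n : ℕ} (m : ℕ) (S : Set (Fin n → Bool)) : Prop :=
  ∃ A : Finset (Fin n), A.card = n - m ∧ ∃ p : Fin n → Bool,
    S = {x | ∀ i ∈ A, x i = p i}

/-- `S` is a subcube of dimension at most `m` (fixing at least `n - m` coordinates). -/
def IsSubcubeLe {n : ℕ} (m : ℕ) (S : Set (Fin n → Bool)) : Prop :=
  ∃ A : Finset (Fin n), n - m ≤ A.card ∧ ∃ p : Fin n → Bool,
    S = {x | ∀ i ∈ A, x i = p i}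

/-!
Let `x, y ∉ S` differ exactly in the coordinates of `D`, with `d = |D|`, and list `D` cyclically
as `a₀, …, a_{d-1}`. Flipping `a_j, a_{j+1}, …` (indices mod `d`) in turn walks from `x` to `y`
along a geodesic; the `d` geodesics obtained for `j < d` are internally disjoint, because the set
of bits flipped at an interior vertex is a proper cyclic arc, which remembers where it starts.
For `i ∉ D`, flipping `i`, then `D`, then `i` again gives a path of length `d + 2` whose vertices
differ from `x` outside `D` exactly in bit `i`, so these detours are disjoint from each other and
from the geodesics. If `d ≥ n - 1` the geodesics alone, and otherwise all `n` paths, are more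
than `|S|` paths of length at most `n`, so one of them misses `S`. The diameter `n` is attained
by an antipodal pair outside `S`, which exists because `2 |S| < 2 ^ n`.
-/

open Finset

theorem Finset.card_le_ncard_of_pairwiseDisjoint {ι α : Type*} {I : Finset ι} {f : ι → Set α}
    {S : Set α} (hS : S.Finite) (hf : (I : Set ι).PairwiseDisjoint f)
    (hmeet : ∀ i ∈ I, ¬Disjoint (f i) S) : #I ≤ S.ncard := by
  simp only [Set.not_disjoint_iff_nonempty_inter] at hmeet
  obtain rfl | ⟨i₀, hi₀⟩ := I.eq_empty_or_nonempty
  · simp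
  have : Nonempty α := (hmeet i₀ hi₀).to_subtype.map Subtype.val
  choose! g hg using hmeet
  rw [← Set.ncard_coe_finset]
  refine Set.ncard_le_ncard_of_injOn g (fun i hi => (hg i hi).2) (fun i hi j hj hij => ?_) hS
  exact hf.elim hi hj (Set.not_disjoint_iff.2 ⟨g i, (hg i hi).1, hij ▸ (hg j hj).1⟩)

theorem Function.Involutive.exists_notMem_and_apply_notMem {α : Type*} [Finite α] {f : α → α}
    (hf : Function.Involutive f) {S : Set α} (hS : 2 * S.ncard < Nat.card α) :
    ∃ v, v ∉ S ∧ f v ∉ S := by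
  by_contra! h
  have hcover : Set.univ ⊆ S ∪ f '' S := fun v _ =>
    (em (v ∈ S)).imp id fun hv => ⟨f v, h v hv, hf v⟩
  have h1 := Set.ncard_le_ncard hcover
  have h2 := Set.ncard_union_le S (f '' S)
  have h3 := Set.ncard_image_le (f := f) S.toFinite
  rw [Set.ncard_univ] at h1
  omega

theorem SimpleGraph.exists_walk_of_adj_succ {V : Type*} {G : SimpleGraph V} (p : ℕ → V) {m : ℕ}
    {u v : V} (h0 : p 0 = u) (hm : p m = v) (hadj : ∀ k < m, G.Adj (p k) (p (k + 1))) :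
    ∃ w : G.Walk u v, w.length = m ∧ ∀ z ∈ w.support, ∃ k ≤ m, p k = z := by
  subst h0 hm
  induction m with
  | zero => exact ⟨.nil, rfl, by simp⟩
  | succ m ih =>
    obtain ⟨w, hw, hsupp⟩ := ih fun k hk => hadj k (by omega)
    refine ⟨w.concat (hadj m (by omega)), by simp [hw], fun z hz => ?_⟩
    rw [Walk.support_concat, List.mem_append, List.mem_singleton] at hz
    rcases hz with hz | rfl
    · obtain ⟨k, hk, rfl⟩ := hsupp z hz
      exact ⟨k, by omega, rfl⟩
    · exact ⟨m + 1, le_rfl, rfl⟩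

def flipSet {n : ℕ} (x : Fin n → Bool) (T : Finset (Fin n)) : Fin n → Bool :=
  fun i => if i ∈ T then !x i else x i

section FlipSet

variable {n : ℕ} {x : Fin n → Bool} {T : Finset (Fin n)} {i : Fin n}

@[simp] theorem flipSet_empty : flipSet x ∅ = x := by
  funext j; simp [flipSet]

@[simp] theorem flipSet_flipSet : flipSet (flipSet x T) T = x := by
  funext j; by_cases hj : j ∈ T <;> simp [flipSet, hj]

theorem hammingDist_flipSet : hammingDist x (flipSet x T) = #T := by
  rw [hammingDist]
  congr 1
  ext j
  by_cases hj : j ∈ T <;> simp [flipSet, hj]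

theorem flipSet_apply_of_notMem (h : i ∉ T) : flipSet x T i = x i := if_neg h

theorem flipSet_insert (h : i ∉ T) : flipSet x (insert i T) = flipBit (flipSet x T) i := by
  funext j
  by_cases hj : j = i
  · subst hj; simp [flipSet, flipBit, h]
  · simp [flipSet, flipBit, hj]

theorem flipSet_flipBit (h : i ∉ T) : flipSet (flipBit x i) T = flipBit (flipSet x T) i := by
  funext j
  by_cases hj : j = i
  · subst hj; simp [flipSet, flipBit, h]
  · simp [flipSet, flipBit, hj]

theorem flipSet_injective (x : Fin n → Bool) : Function.Injective (flipSet x) := by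
  intro T T' h
  ext j
  have := congrFun h j
  by_cases hj : j ∈ T <;> by_cases hj' : j ∈ T' <;> simp_all [flipSet]

theorem flipSet_filter_ne (x y : Fin n → Bool) : flipSet x {i | x i ≠ y i} = y := by
  funext j
  cases hx : x j <;> cases hy : y j <;> simp [flipSet, hx, hy]

@[simp] theorem flipBit_apply_self : flipBit x i i = !x i := by simp [flipBit]

theorem flipBit_apply_of_ne {j : Fin n} (h : j ≠ i) : flipBit x i j = x j :=
  Function.update_of_ne h _ _

end FlipSet

namespace Q

variable {n : ℕ}

theorem adj_flipBit (x : Fin n → Bool) (i : Fin n) : (Q n).Adj x (flipBit x i) := by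
  show hammingDist x (flipBit x i) = 1
  rw [hammingDist, card_eq_one]
  refine ⟨i, ext fun j => ?_⟩
  by_cases hj : j = i
  · subst hj; simp
  · simp [flipBit_apply_of_ne hj, hj]

theorem hammingDist_le_length {u v : Fin n → Bool} (w : (Q n).Walk u v) :
    hammingDist u v ≤ w.length := by
  induction w with
  | nil => simp
  | @cons u c v hadj w ih =>
    have hadj : hammingDist u c = 1 := hadj
    have := hammingDist_triangle u c v
    rw [Walk.length_cons]
    omega

end Q

section CyclicEnumeration

variable {α : Type*} {a : ℕ → α} {d j k : ℕ}

theorem Finset.exists_cyclic_enumeration (D : Finset α) (hD : D.Nonempty) :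
    ∃ a : ℕ → α, (∀ m m', a m = a m' ↔ m ≡ m' [MOD #D]) ∧ ∀ m, a m ∈ D := by
  refine ⟨fun m => D.equivFin.symm ⟨m % #D, Nat.mod_lt _ hD.card_pos⟩, fun m m' => ?_,
    fun m => (D.equivFin.symm _).2⟩
  rw [Subtype.coe_inj, D.equivFin.symm.injective.eq_iff, Fin.mk.injEq]
  rfl

theorem injOn_Ico_of_apply_eq_iff_modEq (ha : ∀ m m', a m = a m' ↔ m ≡ m' [MOD d]) (c : ℕ) :
    Set.InjOn a (Ico c (c + d)) := by
  intro m hm m' hm' h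
  simp only [coe_Ico, Set.mem_Ico] at hm hm'
  exact ((ha m m').1 h).eq_of_abs_lt (by rw [abs_lt]; omega)

variable [DecidableEq α]

theorem card_image_Ico_of_apply_eq_iff_modEq (ha : ∀ m m', a m = a m' ↔ m ≡ m' [MOD d])
    (hk : k ≤ d) : #((Ico j (j + k)).image a) = k := by
  rw [card_image_of_injOn ((injOn_Ico_of_apply_eq_iff_modEq ha j).mono
    (coe_subset.2 (Ico_subset_Ico_right (by omega)))), Nat.card_Ico]
  omega

theorem apply_notMem_image_Ico (ha : ∀ m m', a m = a m' ↔ m ≡ m' [MOD d]) {m : ℕ}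
    (hkm : j + k ≤ m) (hm : m < j + d) : a m ∉ (Ico j (j + k)).image a := by
  rw [mem_image]
  rintro ⟨m', hm', he⟩
  rw [mem_Ico] at hm'
  have := injOn_Ico_of_apply_eq_iff_modEq ha j (by simp; omega) (by simp; omega) he
  omega

theorem image_Ico_eq_of_apply_eq_iff_modEq {D : Finset α}
    (ha : ∀ m m', a m = a m' ↔ m ≡ m' [MOD #D]) (haD : ∀ m, a m ∈ D) (j : ℕ) :
    (Ico j (j + #D)).image a = D :=
  eq_of_subset_of_card_le (image_subset_iff.2 fun m _ => haD m)
    (card_image_Ico_of_apply_eq_iff_modEq ha le_rfl).ge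

/-- A nonempty proper arc of the cycle determines its starting point. -/
theorem eq_of_image_Ico_eq (ha : ∀ m m', a m = a m' ↔ m ≡ m' [MOD d]) {j' k' : ℕ}
    (hj : j < d) (hj' : j' < d) (hk : 0 < k) (hkd : k < d)
    (h : (Ico j (j + k)).image a = (Ico j' (j' + k')).image a) : j = j' := by
  obtain ⟨m, hm, hmj⟩ := mem_image.1 (h ▸ mem_image_of_mem a (left_mem_Ico.2 (by omega)))
  rw [mem_Ico] at hm
  have hmod : m ≡ j [MOD d] := (ha m j).1 hmj
  rcases eq_or_lt_of_le hm.1 with rfl | hlt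
  · exact (hmod.eq_of_lt_of_lt hj' hj).symm
  -- the element `a (m - 1)` preceding `a j` lies in the right-hand arc but not in the left one
  have hprev : a (m - 1) = a (j + (d - 1)) := by
    refine (ha _ _).2 (Nat.ModEq.add_right_cancel' 1 ?_)
    rw [Nat.sub_add_cancel (by omega), show j + (d - 1) + 1 = j + d by omega]
    exact hmod.trans Nat.add_modEq_right.symm
  have hmem : a (m - 1) ∈ (Ico j (j + k)).image a :=
    h ▸ mem_image_of_mem a (mem_Ico.2 ⟨by omega, by omega⟩)
  exact absurd (hprev ▸ hmem) (apply_notMem_image_Ico ha (by omega) (by omega))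

end CyclicEnumeration

section Paths

variable {n : ℕ} {D : Finset (Fin n)} {a : ℕ → Fin n}

theorem Q.exists_walk_flipSet (ha : ∀ m m', a m = a m' ↔ m ≡ m' [MOD #D]) (haD : ∀ m, a m ∈ D)
    (b : Fin n → Bool) (j : ℕ) :
    ∃ w : (Q n).Walk b (flipSet b D), w.length = #D ∧
      ∀ z ∈ w.support, ∃ k ≤ #D, flipSet b ((Ico j (j + k)).image a) = z := by
  refine exists_walk_of_adj_succ (fun k => flipSet b ((Ico j (j + k)).image a)) (by simp)
    (by rw [image_Ico_eq_of_apply_eq_iff_modEq ha haD]) fun k hk => ?_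
  rw [← add_assoc, Nat.Ico_succ_right_eq_insert_Ico (by omega), image_insert,
    flipSet_insert (apply_notMem_image_Ico ha le_rfl (by omega))]
  exact Q.adj_flipBit _ _

/-- Interior vertices of `x`–`flipSet x D` paths: `inl j` is the geodesic flipping
`a j, a (j + 1), …` in turn, `inr i` the detour that flips `i` first and last. -/
def pathInterior (x : Fin n → Bool) (a : ℕ → Fin n) (d : ℕ) :
    ℕ ⊕ Fin n → Set (Fin n → Bool)
  | .inl j => (fun k => flipSet x ((Ico j (j + k)).image a)) '' Set.Ioo 0 d
  | .inr i => (fun k => flipSet (flipBit x i) ((Ico 0 k).image a)) '' Set.Iic d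

theorem Q.exists_walk_of_disjoint_pathInterior_inl (ha : ∀ m m', a m = a m' ↔ m ≡ m' [MOD #D])
    (haD : ∀ m, a m ∈ D) {S : Set (Fin n → Bool)} {x : Fin n → Bool} (hx : x ∉ S)
    (hy : flipSet x D ∉ S) {j : ℕ} (h : Disjoint (pathInterior x a #D (.inl j)) S) :
    ∃ w : (Q n).Walk x (flipSet x D), w.length = #D ∧ ∀ z ∈ w.support, z ∉ S := by
  obtain ⟨w, hw, hsupp⟩ := Q.exists_walk_flipSet ha haD x j
  refine ⟨w, hw, fun z hz hzS => ?_⟩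
  obtain ⟨k, hk, rfl⟩ := hsupp z hz
  rcases Nat.eq_zero_or_pos k with rfl | hk0
  · exact hx (by simpa using hzS)
  rcases hk.lt_or_eq with hkD | rfl
  · exact Set.disjoint_left.1 h ⟨k, ⟨hk0, hkD⟩, rfl⟩ hzS
  · exact hy (by rwa [image_Ico_eq_of_apply_eq_iff_modEq ha haD] at hzS)

theorem Q.exists_walk_of_disjoint_pathInterior_inr (ha : ∀ m m', a m = a m' ↔ m ≡ m' [MOD #D])
    (haD : ∀ m, a m ∈ D) {S : Set (Fin n → Bool)} {x : Fin n → Bool} (hx : x ∉ S)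
    (hy : flipSet x D ∉ S) {i : Fin n} (hi : i ∉ D)
    (h : Disjoint (pathInterior x a #D (.inr i)) S) :
    ∃ w : (Q n).Walk x (flipSet x D), w.length = #D + 2 ∧ ∀ z ∈ w.support, z ∉ S := by
  obtain ⟨w, hw, hsupp⟩ := Q.exists_walk_flipSet ha haD (flipBit x i) 0
  have hlast := (Q.adj_flipBit (flipSet x D) i).symm
  rw [← flipSet_flipBit hi] at hlast
  refine ⟨.cons (Q.adj_flipBit x i) (w.concat hlast), by simp [hw], fun z hz hzS => ?_⟩
  rw [Walk.support_cons, Walk.support_concat, List.mem_cons, List.mem_append,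
    List.mem_singleton] at hz
  rcases hz with rfl | hz | rfl
  · exact hx hzS
  · obtain ⟨k, hk, rfl⟩ := hsupp z hz
    exact Set.disjoint_left.1 h ⟨k, hk, by simp⟩ hzS
  · exact hy hzS

theorem pairwiseDisjoint_pathInterior (ha : ∀ m m', a m = a m' ↔ m ≡ m' [MOD #D])
    (haD : ∀ m, a m ∈ D) (x : Fin n → Bool) :
    ((range #D).disjSum Dᶜ : Set (ℕ ⊕ Fin n)).PairwiseDisjoint (pathInterior x a #D) := by
  have hinl : ∀ j, ∀ z ∈ pathInterior x a #D (.inl j), ∀ i ∉ D, z i = x i := by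
    rintro j _ ⟨k, -, rfl⟩ i hi
    exact flipSet_apply_of_notMem fun hmem => hi (image_subset_iff.2 (fun m _ => haD m) hmem)
  have hinr : ∀ i, ∀ z ∈ pathInterior x a #D (.inr i), ∀ i' ∉ D, z i' = flipBit x i i' := by
    rintro i _ ⟨k, -, rfl⟩ i' hi'
    exact flipSet_apply_of_notMem fun hmem => hi' (image_subset_iff.2 (fun m _ => haD m) hmem)
  rintro (j | i) hι (j' | i') hι' hne <;>
    simp only [mem_coe, inl_mem_disjSum, inr_mem_disjSum, mem_range, mem_compl] at hι hι' <;>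
    refine Function.onFun_apply _ _ _ _ ▸ Set.disjoint_left.2 fun z hz hz' => hne ?_
  · obtain ⟨k, hk, rfl⟩ := hz
    obtain ⟨k', hk', he⟩ := hz'
    rw [eq_of_image_Ico_eq ha hι hι' hk.1 hk.2 (flipSet_injective x he).symm]
  · simpa using (hinl j z hz i' hι').symm.trans (hinr i' z hz' i' hι')
  · simpa using (hinl j' z hz' i hι).symm.trans (hinr i z hz i hι)
  · refine congrArg Sum.inr (by_contra fun hii' => ?_)
    have := (hinr i z hz i' hι').symm.trans (hinr i' z hz' i' hι')
    simp [flipBit_apply_of_ne (Ne.symm hii')] at this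

end Paths

theorem Q.exists_walk_length_le_forall_notMem {n : ℕ} {S : Set (Fin n → Bool)}
    (hS : S.ncard + 2 ≤ n) {x y : Fin n → Bool} (hx : x ∉ S) (hy : y ∉ S) :
    ∃ w : (Q n).Walk x y, w.length ≤ n ∧ ∀ z ∈ w.support, z ∉ S := by
  classical
  obtain ⟨D, rfl⟩ : ∃ D, flipSet x D = y := ⟨_, flipSet_filter_ne x y⟩
  obtain rfl | hD := D.eq_empty_or_nonempty
  · exact ⟨Walk.nil.copy rfl flipSet_empty.symm, by simp, by simpa using hx⟩
  obtain ⟨a, ha, haD⟩ := D.exists_cyclic_enumeration hD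
  have hDn : #D ≤ n := by simpa using D.card_le_univ
  by_contra! hlong
  have hinl : ∀ j, ¬Disjoint (pathInterior x a #D (.inl j)) S := fun j h => by
    obtain ⟨w, hw, hwS⟩ := Q.exists_walk_of_disjoint_pathInterior_inl ha haD hx hy h
    obtain ⟨z, hz, hzS⟩ := hlong w (by omega)
    exact hwS z hz hzS
  have hinr : #D + 2 ≤ n → ∀ i ∉ D, ¬Disjoint (pathInterior x a #D (.inr i)) S :=
    fun hlen i hi h => by
      obtain ⟨w, hw, hwS⟩ := Q.exists_walk_of_disjoint_pathInterior_inr ha haD hx hy hi h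
      obtain ⟨z, hz, hzS⟩ := hlong w (by omega)
      exact hwS z hz hzS
  have hcount : ∀ E ⊆ Dᶜ, (∀ i ∈ E, #D + 2 ≤ n) → #D + #E ≤ S.ncard := fun E hE hEn => by
    rw [← card_range #D, ← card_disjSum]
    refine card_le_ncard_of_pairwiseDisjoint S.toFinite
      ((pairwiseDisjoint_pathInterior ha haD x).subset
        (coe_subset.2 (disjSum_mono subset_rfl hE))) ?_
    rintro (j | i) hι
    · exact hinl j
    · rw [inr_mem_disjSum] at hι
      exact hinr (hEn i hι) i (mem_compl.1 (hE hι))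
  rcases le_or_gt (#D + 2) n with hlen | hlen
  · have := hcount Dᶜ subset_rfl fun _ _ => hlen
    rw [card_compl, Fintype.card_fin] at this
    omega
  · have := hcount ∅ (empty_subset _) (by simp)
    rw [card_empty] at this
    omega

theorem Q.exists_notMem_and_flipSet_univ_notMem {n : ℕ} {S : Set (Fin n → Bool)}
    (hS : S.ncard + 2 ≤ n) : ∃ v, v ∉ S ∧ flipSet v univ ∉ S := by
  have hinv : Function.Involutive (flipSet · (univ : Finset (Fin n))) := fun _ => flipSet_flipSet
  refine hinv.exists_notMem_and_apply_notMem ?_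
  have := (n - 1).lt_two_pow_self
  have h2 : 2 ^ n = 2 * 2 ^ (n - 1) := by rw [← pow_succ', Nat.sub_add_cancel (by omega)]
  simp only [Nat.card_eq_fintype_card, Fintype.card_fun, Fintype.card_bool, Fintype.card_fin]
  omega

theorem Q.hammingDist_le_dist_induce {n : ℕ} {s : Set (Fin n → Bool)} {u v : s}
    (h : ((Q n).induce s).Reachable u v) :
    hammingDist (u : Fin n → Bool) v ≤ ((Q n).induce s).dist u v := by
  obtain ⟨w, hw⟩ := h.exists_walk_length_eq_dist
  rw [← hw, ← Walk.length_map (Embedding.induce s).toHom]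
  exact Q.hammingDist_le_length _

theorem removal_keeps_diameter (n : ℕ) (hn : 2 ≤ n) (S : Set (Fin n → Bool))
    (hS : S.ncard ≤ n - 2) :
    ((Q n).induce Sᶜ).Connected ∧
    (∀ x y, ((Q n).induce Sᶜ).dist x y ≤ n) ∧
    ∃ x y, ((Q n).induce Sᶜ).dist x y = n := by
  have hS' : S.ncard + 2 ≤ n := by omega
  have hwalk : ∀ x y : ↥Sᶜ, ∃ w : ((Q n).induce Sᶜ).Walk x y, w.length ≤ n := fun x y => by
    obtain ⟨w, hw, hwS⟩ := Q.exists_walk_length_le_forall_notMem hS' x.2 y.2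
    refine ⟨w.induce Sᶜ hwS, ?_⟩
    rwa [← Walk.length_map (Embedding.induce Sᶜ).toHom, Walk.map_induce]
  have hdist : ∀ x y, ((Q n).induce Sᶜ).dist x y ≤ n := fun x y =>
    (hwalk x y).elim fun w hw => (dist_le w).trans hw
  obtain ⟨v, hv, hv'⟩ := Q.exists_notMem_and_flipSet_univ_notMem hS'
  have hconn : ((Q n).induce Sᶜ).Connected :=
    @Connected.mk _ _ (fun x y => (hwalk x y).elim fun w _ => w.reachable) ⟨⟨v, hv⟩⟩
  refine ⟨hconn, hdist, ⟨v, hv⟩, ⟨_, hv'⟩, (hdist _ _).antisymm ?_⟩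
  calc n = hammingDist v (flipSet v univ) := by simp [hammingDist_flipSet]
    _ ≤ _ := Q.hammingDist_le_dist_induce (hconn.preconnected ⟨v, hv⟩ ⟨_, hv'⟩)
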